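/- Let p ∈ C^{log}(ℝⁿ) be a globally log-Hölder continuous variable exponent with 0 < p₋ ≤ p₊ ≤ ∞. Then there exists a constant C ≥ 1 such that for all dyadic cubes Q_{jk} = 2^{−j}([0,1)ⁿ+k) with j ∈ ℤ₊ and k ∈ ℤⁿ: C⁻¹ 2^{−jn/p₋} (1+|k|)^{n(1/p₊ − 1/p₋)} ≤ ‖χ_{Q_{jk}}‖_{L^{p(·)}(ℝⁿ)} ≤ C 2^{−jn/p₊} (1+|k|)^{n(1/p₋ − 1/p₊)}. -/

import Mathlib

open MeasureTheory Real
open scoped ENNReal BigOperators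

noncomputable section

/-- The dyadic cube `Q_{jk} = 2^{−j}([0,1)ⁿ + k)` in `ℝⁿ`. -/
def dyadicCube {n : ℕ} (j : ℤ) (k : Fin n → ℤ) : Set (EuclideanSpace ℝ (Fin n)) :=
  {x | ∀ i, (2 : ℝ) ^ (-j) * (k i : ℝ) ≤ x i ∧ x i < (2 : ℝ) ^ (-j) * ((k i : ℝ) + 1)}

/-- The variable-exponent modular for a real-valued exponent `p` and a
nonnegative function `f`. -/
def varModularR {n : ℕ} (p : EuclideanSpace ℝ (Fin n) → ℝ)
    (f : EuclideanSpace ℝ (Fin n) → ℝ≥0∞) : ℝ≥0∞ :=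
  ∫⁻ x, f x ^ p x

/-- The variable-exponent Lebesgue (Luxemburg) quasi-norm. -/
def varNormR {n : ℕ} (p : EuclideanSpace ℝ (Fin n) → ℝ)
    (f : EuclideanSpace ℝ (Fin n) → ℝ≥0∞) : ℝ≥0∞ :=
  sInf {lam : ℝ≥0∞ | 0 < lam ∧ varModularR p (fun x => f x / lam) ≤ 1}

/-- Local log-Hölder continuity. -/
def LocLogHolder {n : ℕ} (g : EuclideanSpace ℝ (Fin n) → ℝ) : Prop :=
  ∃ C : ℝ, 0 < C ∧ ∀ x y : EuclideanSpace ℝ (Fin n), x ≠ y →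
    |g x - g y| ≤ C / Real.log (Real.exp 1 + 1 / dist x y)

/-- Global log-Hölder continuity. -/
def GlobLogHolder {n : ℕ} (g : EuclideanSpace ℝ (Fin n) → ℝ) : Prop :=
  LocLogHolder g ∧ ∃ Cinf : ℝ, 0 < Cinf ∧ ∃ ginf : ℝ,
    ∀ x : EuclideanSpace ℝ (Fin n), |g x - ginf| ≤ Cinf / Real.log (Real.exp 1 + ‖x‖)

/-!
Since `p` is log-Hölder at infinity it is bounded, so `p₋ ≤ p(x) ≤ p₊` almost everywhere with
`0 < p₋ ≤ p₊ < ∞`. For a set `E` with `|E| ≤ 1` the relevant `λ` in the Luxemburg infimum are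
`≤ 1`, and for those `λ^{-p₋} ≤ λ^{-p(x)} ≤ λ^{-p₊}`; testing `λ = |E|^{1/p₊}`, resp. comparing
with `λ < |E|^{1/p₋}`, gives `|E|^{1/p₋} ≤ ‖χ_E‖_{p(·)} ≤ |E|^{1/p₊}`. A dyadic cube with `j ≥ 0`
has measure `2^{-jn} ≤ 1`, so `C = 1` works: the factors `(1 + |k|)^{±n(1/p₋ - 1/p₊)}` only weaken
these bounds, their exponents having the right sign.
-/

open Set

section VariableExponent

variable {n : ℕ} {p : EuclideanSpace ℝ (Fin n) → ℝ} {E : Set (EuclideanSpace ℝ (Fin n))}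

theorem GlobLogHolder.isBounded_range (hp : GlobLogHolder p) : Bornology.IsBounded (range p) := by
  obtain ⟨-, C, hC, c, hdecay⟩ := hp
  refine (Metric.isBounded_iff_subset_closedBall c).2 ⟨C, ?_⟩
  rintro _ ⟨x, rfl⟩
  have hlog : 1 ≤ Real.log (Real.exp 1 + ‖x‖) :=
    (Real.le_log_iff_exp_le (by positivity)).2 (le_add_of_nonneg_right (norm_nonneg x))
  exact (hdecay x).trans (div_le_self hC.le hlog)

theorem varModularR_indicator_div (hE : MeasurableSet E) (hp : ∀ᵐ x, 0 < p x) (lam : ℝ≥0∞) :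
    varModularR p (fun x => E.indicator (fun _ => 1) x / lam) = ∫⁻ x in E, lam⁻¹ ^ p x := by
  rw [varModularR, ← lintegral_indicator hE]
  refine lintegral_congr_ae (hp.mono fun x hx => ?_)
  by_cases hxE : x ∈ E
  · simp [hxE]
  · simp [hxE, ENNReal.zero_rpow_of_pos hx]

theorem ENNReal.inv_rpow_inv_rpow_mul_self {m : ℝ≥0∞} (h0 : m ≠ 0) (htop : m ≠ ⊤) {b : ℝ}
    (hb : b ≠ 0) : (m ^ b⁻¹)⁻¹ ^ b * m = 1 := by
  rw [ENNReal.inv_rpow, ENNReal.rpow_inv_rpow hb, ENNReal.inv_mul_cancel h0 htop]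

theorem varNormR_indicator_le (hE : MeasurableSet E) (hE0 : volume E ≠ 0) (hE1 : volume E ≤ 1)
    {b : ℝ} (hb : 0 < b) (hp : ∀ᵐ x, 0 < p x) (hpb : ∀ᵐ x, p x ≤ b) :
    varNormR p (E.indicator fun _ => 1) ≤ volume E ^ b⁻¹ := by
  set lam := volume E ^ b⁻¹
  have hlam : 1 ≤ lam⁻¹ := ENNReal.one_le_inv.2 (ENNReal.rpow_le_one hE1 (inv_nonneg.2 hb.le))
  refine sInf_le ⟨ENNReal.rpow_pos (pos_iff_ne_zero.2 hE0) (hE1.trans_lt ENNReal.one_lt_top).ne, ?_⟩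
  calc varModularR p (fun x => E.indicator (fun _ => 1) x / lam)
      = ∫⁻ x in E, lam⁻¹ ^ p x := varModularR_indicator_div hE hp lam
    _ ≤ ∫⁻ _ in E, lam⁻¹ ^ b :=
        lintegral_mono_ae ((ae_restrict_of_ae hpb).mono fun x hx =>
          ENNReal.rpow_le_rpow_of_exponent_le hlam hx)
    _ = 1 := by
        rw [setLIntegral_const]
        exact ENNReal.inv_rpow_inv_rpow_mul_self hE0 (hE1.trans_lt ENNReal.one_lt_top).ne hb.ne'

theorem rpow_inv_le_varNormR_indicator (hE : MeasurableSet E) (hE1 : volume E ≤ 1)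
    {a : ℝ} (ha : 0 < a) (hpa : ∀ᵐ x, a ≤ p x) :
    volume E ^ a⁻¹ ≤ varNormR p (E.indicator fun _ => 1) := by
  refine le_sInf fun lam ⟨hlam0, hmod⟩ => not_lt.1 fun hlt => hmod.not_gt ?_
  have hEtop : volume E ≠ ⊤ := (hE1.trans_lt ENNReal.one_lt_top).ne
  have hE0 : volume E ≠ 0 := by
    rintro hE0
    rw [hE0, ENNReal.zero_rpow_of_pos (inv_pos.2 ha)] at hlt
    exact ENNReal.not_lt_zero hlt
  have hlam : 1 ≤ lam⁻¹ :=
    ENNReal.one_le_inv.2 (hlt.le.trans (ENNReal.rpow_le_one hE1 (inv_nonneg.2 ha.le)))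
  calc 1 = (volume E ^ a⁻¹)⁻¹ ^ a * volume E :=
        (ENNReal.inv_rpow_inv_rpow_mul_self hE0 hEtop ha.ne').symm
    _ < lam⁻¹ ^ a * volume E :=
        ENNReal.mul_lt_mul_left hE0 hEtop
          (ENNReal.rpow_lt_rpow (ENNReal.inv_lt_inv.2 hlt) ha)
    _ = ∫⁻ _ in E, lam⁻¹ ^ a := (setLIntegral_const _ _).symm
    _ ≤ ∫⁻ x in E, lam⁻¹ ^ p x :=
        lintegral_mono_ae ((ae_restrict_of_ae hpa).mono fun x hx =>
          ENNReal.rpow_le_rpow_of_exponent_le hlam hx)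
    _ = varModularR p (fun x => E.indicator (fun _ => 1) x / lam) :=
        (varModularR_indicator_div hE (hpa.mono fun x hx => ha.trans_le hx) lam).symm

end VariableExponent

section DyadicCube

variable {n : ℕ}

theorem dyadicCube_eq_preimage_pi (j : ℤ) (k : Fin n → ℤ) :
    dyadicCube j k = (MeasurableEquiv.toLp 2 (Fin n → ℝ)).symm ⁻¹'
      univ.pi fun i => Ico ((2 : ℝ) ^ (-j) * k i) ((2 : ℝ) ^ (-j) * (k i + 1)) := by
  ext x
  simp [dyadicCube, Set.mem_pi, MeasurableEquiv.coe_toLp_symm]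

theorem measurableSet_dyadicCube (j : ℤ) (k : Fin n → ℤ) : MeasurableSet (dyadicCube j k) := by
  rw [dyadicCube_eq_preimage_pi]
  exact (MeasurableEquiv.toLp 2 (Fin n → ℝ)).symm.measurable
    (MeasurableSet.univ_pi fun _ => measurableSet_Ico)

theorem volume_dyadicCube (j : ℤ) (k : Fin n → ℤ) :
    volume (dyadicCube j k) = ENNReal.ofReal ((2 : ℝ) ^ (-(j : ℝ) * n)) := by
  rw [dyadicCube_eq_preimage_pi,
    (EuclideanSpace.volume_preserving_symm_measurableEquiv_toLp (Fin n)).measure_preimage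
      (MeasurableSet.univ_pi fun _ => measurableSet_Ico).nullMeasurableSet,
    volume_pi_pi]
  simp only [Real.volume_Ico, ← mul_sub, add_sub_cancel_left, mul_one, Finset.prod_const,
    Finset.card_univ, Fintype.card_fin, ← ENNReal.ofReal_pow (zpow_nonneg zero_le_two _)]
  rw [← Real.rpow_natCast, ← Real.rpow_intCast, ← Real.rpow_mul zero_le_two]
  push_cast
  rfl

theorem volume_dyadicCube_rpow_inv (j : ℤ) (k : Fin n → ℤ) (q : ℝ) :
    volume (dyadicCube j k) ^ q⁻¹ = ENNReal.ofReal ((2 : ℝ) ^ (-(j : ℝ) * n / q)) := by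
  rw [volume_dyadicCube, ENNReal.ofReal_rpow_of_pos (by positivity), ← Real.rpow_mul zero_le_two,
    div_eq_mul_inv]

theorem volume_dyadicCube_le_one (j : ℕ) (k : Fin n → ℤ) : volume (dyadicCube (j : ℤ) k) ≤ 1 := by
  rw [volume_dyadicCube]
  refine ENNReal.ofReal_le_one.2 (Real.rpow_le_one_of_one_le_of_nonpos one_le_two ?_)
  push_cast
  nlinarith [(j.cast_nonneg : (0 : ℝ) ≤ j), (n.cast_nonneg : (0 : ℝ) ≤ n)]

theorem volume_dyadicCube_ne_zero (j : ℤ) (k : Fin n → ℤ) : volume (dyadicCube j k) ≠ 0 := by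
  rw [volume_dyadicCube]
  exact ENNReal.ofReal_pos.2 (by positivity) |>.ne'

theorem rpow_le_varNormR_indicator_dyadicCube {p : EuclideanSpace ℝ (Fin n) → ℝ} (j : ℕ)
    (k : Fin n → ℤ) {a : ℝ} (ha : 0 < a) (hpa : ∀ᵐ x, a ≤ p x) :
    ENNReal.ofReal ((2 : ℝ) ^ (-(j : ℝ) * n / a)) ≤
      varNormR p ((dyadicCube (j : ℤ) k).indicator fun _ => 1) := by
  have hvol := volume_dyadicCube_rpow_inv (j : ℤ) k a
  push_cast at hvol
  rw [← hvol]
  exact rpow_inv_le_varNormR_indicator (measurableSet_dyadicCube _ k)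
    (volume_dyadicCube_le_one j k) ha hpa

theorem varNormR_indicator_dyadicCube_le_rpow {p : EuclideanSpace ℝ (Fin n) → ℝ} (j : ℕ)
    (k : Fin n → ℤ) {b : ℝ} (hb : 0 < b) (hp : ∀ᵐ x, 0 < p x) (hpb : ∀ᵐ x, p x ≤ b) :
    varNormR p ((dyadicCube (j : ℤ) k).indicator fun _ => 1) ≤
      ENNReal.ofReal ((2 : ℝ) ^ (-(j : ℝ) * n / b)) := by
  have hvol := volume_dyadicCube_rpow_inv (j : ℤ) k b
  push_cast at hvol
  rw [← hvol]
  exact varNormR_indicator_le (measurableSet_dyadicCube _ k) (volume_dyadicCube_ne_zero _ k)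
    (volume_dyadicCube_le_one j k) hb hp hpb

end DyadicCube

theorem varNorm_indicator_dyadicCube_bounds_general {n : ℕ}
    (p : EuclideanSpace ℝ (Fin n) → ℝ)
    (hp_log : GlobLogHolder p)
    (hp_minus : 0 < essInf p (volume : Measure (EuclideanSpace ℝ (Fin n)))) :
    ∃ C : ℝ, 1 ≤ C ∧ ∀ (j : ℕ) (k : Fin n → ℤ),
      (ENNReal.ofReal (C⁻¹ * (2 : ℝ) ^ (-(j : ℝ) * n /
            essInf p (volume : Measure (EuclideanSpace ℝ (Fin n)))) *
          (1 + ((∑ i, |k i| : ℤ) : ℝ)) ^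
            ((n : ℝ) * (1 / essSup p (volume : Measure (EuclideanSpace ℝ (Fin n)))
              - 1 / essInf p (volume : Measure (EuclideanSpace ℝ (Fin n)))))) ≤
        varNormR p (Set.indicator (dyadicCube (j : ℤ) k) (fun _ => 1))) ∧
      (varNormR p (Set.indicator (dyadicCube (j : ℤ) k) (fun _ => 1)) ≤
        ENNReal.ofReal (C * (2 : ℝ) ^ (-(j : ℝ) * n /
            essSup p (volume : Measure (EuclideanSpace ℝ (Fin n)))) *
          (1 + ((∑ i, |k i| : ℤ) : ℝ)) ^
            ((n : ℝ) * (1 / essInf p (volume : Measure (EuclideanSpace ℝ (Fin n)))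
              - 1 / essSup p (volume : Measure (EuclideanSpace ℝ (Fin n))))))) := by
  set pm := essInf p (volume : Measure (EuclideanSpace ℝ (Fin n)))
  set ps := essSup p (volume : Measure (EuclideanSpace ℝ (Fin n)))
  have hbdd := hp_log.isBounded_range
  have hinf : ∀ᵐ x, pm ≤ p x := ae_essInf_le hbdd.bddBelow.isBoundedUnder_of_range
  have hsup : ∀ᵐ x, p x ≤ ps := ae_le_essSup hbdd.bddAbove.isBoundedUnder_of_range
  have hpm_le_ps : pm ≤ ps := by
    obtain ⟨x, hx⟩ := (hinf.and hsup).exists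
    exact hx.1.trans hx.2
  have hps : 0 < ps := hp_minus.trans_le hpm_le_ps
  have hinv : 1 / ps ≤ 1 / pm := one_div_le_one_div_of_le hp_minus hpm_le_ps
  refine ⟨1, le_rfl, fun j k => ?_⟩
  have hK : (1 : ℝ) ≤ 1 + ((∑ i, |k i| : ℤ) : ℝ) :=
    le_add_of_nonneg_right (Int.cast_nonneg (Finset.sum_nonneg fun i _ => abs_nonneg (k i)))
  constructor
  · refine (ENNReal.ofReal_le_ofReal ?_).trans
      (rpow_le_varNormR_indicator_dyadicCube j k hp_minus hinf)
    rw [inv_one, one_mul]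
    exact mul_le_of_le_one_right (by positivity) (Real.rpow_le_one_of_one_le_of_nonpos hK
      (mul_nonpos_of_nonneg_of_nonpos n.cast_nonneg (sub_nonpos.2 hinv)))
  · refine (varNormR_indicator_dyadicCube_le_rpow j k hps
      (hinf.mono fun x hx => hp_minus.trans_le hx) hsup).trans (ENNReal.ofReal_le_ofReal ?_)
    rw [one_mul]
    exact le_mul_of_one_le_right (by positivity) (Real.one_le_rpow hK
      (mul_nonneg n.cast_nonneg (sub_nonneg.2 hinv)))

/-- Let `p ∈ C^{log}(ℝⁿ)` with `0 < p₋ ≤ p₊ < ∞`. Then there is a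
constant `C ≥ 1` such that for all dyadic cubes `Q_{jk}` with `j ∈ ℤ₊, k ∈ ℤⁿ`:
`C⁻¹ 2^{−jn/p₋}(1+|k|)^{n(1/p₊−1/p₋)} ≤ ‖χ_{Q_{jk}}‖_{p(·)} ≤ C 2^{−jn/p₊}(1+|k|)^{n(1/p₋−1/p₊)}`. -/
theorem varNorm_indicator_dyadicCube_bounds {n : ℕ}
    (p : EuclideanSpace ℝ (Fin n) → ℝ)
    (hp_meas : Measurable p)
    (hp_log : GlobLogHolder p)
    (hp_minus : 0 < essInf p (volume : Measure (EuclideanSpace ℝ (Fin n)))) :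
    ∃ C : ℝ, 1 ≤ C ∧ ∀ (j : ℕ) (k : Fin n → ℤ),
      (ENNReal.ofReal (C⁻¹ * (2 : ℝ) ^ (-(j : ℝ) * n /
            essInf p (volume : Measure (EuclideanSpace ℝ (Fin n)))) *
          (1 + ((∑ i, |k i| : ℤ) : ℝ)) ^
            ((n : ℝ) * (1 / essSup p (volume : Measure (EuclideanSpace ℝ (Fin n)))
              - 1 / essInf p (volume : Measure (EuclideanSpace ℝ (Fin n)))))) ≤
        varNormR p (Set.indicator (dyadicCube (j : ℤ) k) (fun _ => 1))) ∧
      (varNormR p (Set.indicator (dyadicCube (j : ℤ) k) (fun _ => 1)) ≤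
        ENNReal.ofReal (C * (2 : ℝ) ^ (-(j : ℝ) * n /
            essSup p (volume : Measure (EuclideanSpace ℝ (Fin n)))) *
          (1 + ((∑ i, |k i| : ℤ) : ℝ)) ^
            ((n : ℝ) * (1 / essInf p (volume : Measure (EuclideanSpace ℝ (Fin n)))
              - 1 / essSup p (volume : Measure (EuclideanSpace ℝ (Fin n))))))) :=
  varNorm_indicator_dyadicCube_bounds_general p hp_log hp_minus
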